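/- arXiv:2511.16257 — 4 statements merged into one kernel-verified Lean document; each statement's English description precedes it below -/
import Mathlib

section
/- Let f : ℝⁿ → ℝ be continuous, homogeneous of degree d > 0 (f(t•x) = t^d f(x) for t ≥ 0), with f(x) > 0 for all x ≠ 0. Then for α > 0, the function x ↦ f(x)^(-α) is integrable on the unit ball of ℝⁿ if and only if α < n/d. -/
open MeasureTheory Measure Metric Set ENNReal

lemma lintegral_fun_norm_addHaar' {E : Type*} [NormedAddCommGroup E] [NormedSpace ℝ E]
    [MeasurableSpace E] [BorelSpace E] [FiniteDimensional ℝ E] [Nontrivial E]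
    (μ : Measure E) [μ.IsAddHaarMeasure] (g : ℝ → ℝ≥0∞) (hg : Measurable g) :
    ∫⁻ x, g ‖x‖ ∂μ = μ.toSphere univ *
      ∫⁻ r in Ioi (0 : ℝ), ENNReal.ofReal (r ^ (Module.finrank ℝ E - 1)) * g r := by
  have h0 : μ {(0 : E)} = 0 := measure_singleton 0
  have hm : Measurable (fun p : sphere (0:E) 1 × Ioi (0:ℝ) => g p.2) :=
    hg.comp (measurable_subtype_coe.comp measurable_snd)
  calc
    ∫⁻ x, g ‖x‖ ∂μ = ∫⁻ x in ({0}ᶜ : Set E), g ‖x‖ ∂μ := by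
      rw [← lintegral_add_compl (fun x => g ‖x‖) (MeasurableSet.singleton (0:E)),
        setLIntegral_measure_zero _ _ h0, zero_add]
    _ = ∫⁻ x : ({0}ᶜ : Set E), g ‖x.1‖ ∂(μ.comap (↑)) :=
      (lintegral_subtype_comap (MeasurableSet.singleton (0:E)).compl fun x => g ‖x‖).symm
    _ = ∫⁻ p : sphere (0:E) 1 × Ioi (0:ℝ), g p.2
        ∂(μ.toSphere.prod (volumeIoiPow (Module.finrank ℝ E - 1))) := by
      rw [← (μ.measurePreserving_homeomorphUnitSphereProd).lintegral_comp
        (f := fun p : sphere (0:E) 1 × Ioi (0:ℝ) => g p.2) hm]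
      simp only [homeomorphUnitSphereProd_apply_snd_coe]
    _ = μ.toSphere univ * ∫⁻ r : Ioi (0:ℝ), g r ∂(volumeIoiPow (Module.finrank ℝ E - 1)) := by
      rw [lintegral_prod (fun p : sphere (0:E) 1 × Ioi (0:ℝ) => g p.2) hm.aemeasurable]
      simp [lintegral_const, mul_comm]
    _ = _ := by
      congr 1
      rw [Measure.volumeIoiPow, lintegral_withDensity_eq_lintegral_mul _
        ((measurable_subtype_coe.pow_const _).ennreal_ofReal)
        (show Measurable fun r : Ioi (0:ℝ) => g r.1 from hg.comp measurable_subtype_coe),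
        ← lintegral_subtype_comap measurableSet_Ioi
          (fun r : ℝ => ENNReal.ofReal (r ^ (Module.finrank ℝ E - 1)) * g r)]
      rfl

lemma integrableOn_norm_rpow_ball {E : Type*} [NormedAddCommGroup E] [NormedSpace ℝ E]
    [MeasurableSpace E] [BorelSpace E] [FiniteDimensional ℝ E] [Nontrivial E]
    (μ : Measure E) [μ.IsAddHaarMeasure] (s : ℝ) :
    IntegrableOn (fun x : E => ‖x‖ ^ (-s)) (ball 0 1) μ ↔ s < Module.finrank ℝ E := by
  set N := Module.finrank ℝ E with hN
  have hN1 : 1 ≤ N := Module.finrank_pos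
  have hcast : ((N - 1 : ℕ) : ℝ) = (N : ℝ) - 1 := by
    rw [Nat.cast_sub hN1, Nat.cast_one]
  set g : ℝ → ℝ≥0∞ := (Iio (1:ℝ)).indicator (fun r => ENNReal.ofReal (r ^ (-s))) with hg
  have hgm : Measurable g :=
    Measurable.indicator (by fun_prop) measurableSet_Iio
  have hmeas : AEStronglyMeasurable (fun x : E => ‖x‖ ^ (-s)) (μ.restrict (ball 0 1)) := by
    apply Measurable.aestronglyMeasurable; fun_prop
  have hnn : 0 ≤ᵐ[μ.restrict (ball 0 1)] fun x : E => ‖x‖ ^ (-s) :=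
    Filter.Eventually.of_forall fun x => Real.rpow_nonneg (norm_nonneg x) _
  have key : (∫⁻ x in ball (0:E) 1, ENNReal.ofReal (‖x‖ ^ (-s)) ∂μ)
      = μ.toSphere univ * ∫⁻ r in Ioo (0:ℝ) 1, ENNReal.ofReal (r ^ ((N:ℝ) - 1 - s)) := by
    have h1 : (∫⁻ x in ball (0:E) 1, ENNReal.ofReal (‖x‖ ^ (-s)) ∂μ) = ∫⁻ x, g ‖x‖ ∂μ := by
      rw [← lintegral_indicator measurableSet_ball]
      congr 1
      ext x
      simp only [hg, indicator]
      by_cases hx : x ∈ ball (0:E) 1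
      · rw [if_pos hx, if_pos (by simpa [mem_ball, dist_zero_right] using hx)]
      · rw [if_neg hx, if_neg (by simpa [mem_ball, dist_zero_right] using hx)]
    rw [h1, lintegral_fun_norm_addHaar' μ g hgm]
    congr 1
    have h2 : ∀ r ∈ Ioi (0:ℝ), ENNReal.ofReal (r ^ (N - 1)) * g r
        = (Iio (1:ℝ)).indicator (fun r => ENNReal.ofReal (r ^ ((N:ℝ) - 1 - s))) r := by
      intro r hr
      simp only [hg, indicator]
      by_cases h : r ∈ Iio (1:ℝ)
      · rw [if_pos h, if_pos h, ← ENNReal.ofReal_mul (pow_nonneg (le_of_lt hr) _)]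
        congr 1
        rw [← Real.rpow_natCast r (N - 1), ← Real.rpow_add hr, hcast]
        ring_nf
      · rw [if_neg h, if_neg h, mul_zero]
    rw [setLIntegral_congr_fun measurableSet_Ioi h2,
      lintegral_indicator measurableSet_Iio, Measure.restrict_restrict measurableSet_Iio,
      Set.Iio_inter_Ioi]
  have hts0 : μ.toSphere univ ≠ 0 := by
    rw [Measure.toSphere_apply_univ]
    exact mul_ne_zero (by exact_mod_cast (by omega : N ≠ 0)) (measure_ball_pos μ 0 one_pos).ne'
  have htsT : μ.toSphere univ ≠ ⊤ := measure_ne_top _ _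
  have h3 : IntegrableOn (fun x : E => ‖x‖ ^ (-s)) (ball 0 1) μ ↔
      (∫⁻ x in ball (0:E) 1, ENNReal.ofReal (‖x‖ ^ (-s)) ∂μ) < ⊤ := by
    rw [IntegrableOn, Integrable, and_iff_right hmeas, hasFiniteIntegral_iff_ofReal hnn]
  have hnn' : 0 ≤ᵐ[volume.restrict (Ioo (0:ℝ) 1)] fun r : ℝ => r ^ ((N:ℝ) - 1 - s) := by
    filter_upwards [ae_restrict_mem measurableSet_Ioo] with r hr
    exact Real.rpow_nonneg hr.1.le _
  have h4 : IntegrableOn (fun r : ℝ => r ^ ((N:ℝ) - 1 - s)) (Ioo (0:ℝ) 1) volume ↔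
      (∫⁻ r in Ioo (0:ℝ) 1, ENNReal.ofReal (r ^ ((N:ℝ) - 1 - s))) < ⊤ := by
    rw [IntegrableOn, Integrable, and_iff_right (by
      apply Measurable.aestronglyMeasurable; fun_prop), hasFiniteIntegral_iff_ofReal hnn']
  have h5 : ∀ I : ℝ≥0∞, (μ.toSphere univ * I < ⊤ ↔ I < ⊤) := by
    intro I
    rw [ENNReal.mul_lt_top_iff]
    constructor
    · rintro (⟨-, h⟩ | h | h)
      · exact h
      · exact absurd h hts0
      · simp [h]
    · intro h
      exact Or.inl ⟨htsT.lt_top, h⟩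
  rw [h3, key, h5, ← h4, intervalIntegral.integrableOn_Ioo_rpow_iff zero_lt_one]
  constructor <;> intro h <;> linarith

theorem homogeneous_pos_rpow_integrable_iff (n : ℕ) (hn : 1 ≤ n) (d : ℝ) (hd : 0 < d)
    (f : EuclideanSpace ℝ (Fin n) → ℝ) (hf : Continuous f)
    (hhom : ∀ t : ℝ, 0 ≤ t → ∀ x, f (t • x) = t ^ d * f x)
    (hpos : ∀ x, x ≠ 0 → 0 < f x)
    (α : ℝ) (hα : 0 < α) :
    IntegrableOn (fun x => f x ^ (-α))
      (Metric.ball (0 : EuclideanSpace ℝ (Fin n)) 1) ↔ α < n / d := by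
  have hE : True := trivial
  have hrank : Module.finrank ℝ (EuclideanSpace ℝ (Fin n)) = n := finrank_euclideanSpace_fin
  haveI : Nontrivial (EuclideanSpace ℝ (Fin n)) := Module.nontrivial_of_finrank_pos (R := ℝ) (by omega : 0 < Module.finrank ℝ (EuclideanSpace ℝ (Fin n)))
  set s : ℝ := d * α with hs
  -- f vanishes at 0
  have h00 : f 0 = 0 := by
    have h := hhom 0 le_rfl 0
    rwa [zero_smul, Real.zero_rpow hd.ne', zero_mul] at h
  have hfnn : ∀ x : EuclideanSpace ℝ (Fin n), 0 ≤ f x := by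
    intro x
    rcases eq_or_ne x 0 with rfl | hx
    · exact h00.ge
    · exact (hpos x hx).le
  -- extrema on the sphere
  obtain ⟨a, haS, ha⟩ := (isCompact_sphere (0 : EuclideanSpace ℝ (Fin n)) 1).exists_isMinOn
    (NormedSpace.sphere_nonempty.mpr zero_le_one) hf.continuousOn
  obtain ⟨b, hbS, hb⟩ := (isCompact_sphere (0 : EuclideanSpace ℝ (Fin n)) 1).exists_isMaxOn
    (NormedSpace.sphere_nonempty.mpr zero_le_one) hf.continuousOn
  have hc₁ : 0 < f a := hpos a (ne_of_mem_sphere haS one_ne_zero)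
  have hc₂ : 0 < f b := hpos b (ne_of_mem_sphere hbS one_ne_zero)
  have hbound : ∀ x : EuclideanSpace ℝ (Fin n), f a * ‖x‖ ^ d ≤ f x ∧ f x ≤ f b * ‖x‖ ^ d := by
    intro x
    rcases eq_or_ne x 0 with rfl | hx
    · simp [h00, Real.zero_rpow hd.ne']
    · have hxn : (0:ℝ) < ‖x‖ := norm_pos_iff.mpr hx
      set u : EuclideanSpace ℝ (Fin n) := ‖x‖⁻¹ • x with hu
      have huS : u ∈ Metric.sphere (0:EuclideanSpace ℝ (Fin n)) 1 := by
        rw [mem_sphere_zero_iff_norm, hu, norm_smul, norm_inv, norm_norm,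
          inv_mul_cancel₀ hxn.ne']
      have hfx : f x = ‖x‖ ^ d * f u := by
        have h := hhom ‖x‖ hxn.le u
        rwa [hu, smul_inv_smul₀ hxn.ne'] at h
      have ht : (0:ℝ) ≤ ‖x‖ ^ d := Real.rpow_nonneg hxn.le _
      constructor
      · rw [hfx, mul_comm (f a)]
        exact mul_le_mul_of_nonneg_left (ha huS) ht
      · rw [hfx, mul_comm (f b)]
        exact mul_le_mul_of_nonneg_left (hb huS) ht
  -- key rpow identity
  have hiden : ∀ (c : ℝ), 0 < c → ∀ x : EuclideanSpace ℝ (Fin n), (c * ‖x‖ ^ d) ^ (-α) = c ^ (-α) * ‖x‖ ^ (-s) := by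
    intro c hc x
    rw [Real.mul_rpow hc.le (Real.rpow_nonneg (norm_nonneg x) _),
      ← Real.rpow_mul (norm_nonneg x), mul_neg]
  have hmeas_f : AEStronglyMeasurable (fun x : EuclideanSpace ℝ (Fin n) => f x ^ (-α))
      (volume.restrict (Metric.ball (0:EuclideanSpace ℝ (Fin n)) 1)) := by
    apply Measurable.aestronglyMeasurable
    have hm := hf.measurable
    fun_prop
  have hmeas_n : AEStronglyMeasurable (fun x : EuclideanSpace ℝ (Fin n) => ‖x‖ ^ (-s))
      (volume.restrict (Metric.ball (0:EuclideanSpace ℝ (Fin n)) 1)) := by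
    apply Measurable.aestronglyMeasurable
    fun_prop
  have hiff : IntegrableOn (fun x => f x ^ (-α)) (Metric.ball (0:EuclideanSpace ℝ (Fin n)) 1) ↔
      IntegrableOn (fun x : EuclideanSpace ℝ (Fin n) => ‖x‖ ^ (-s)) (Metric.ball (0:EuclideanSpace ℝ (Fin n)) 1) volume := by
    constructor
    · intro h
      refine Integrable.mono' (h.const_mul (f b ^ α)) hmeas_n ?_
      filter_upwards with x
      rw [Real.norm_eq_abs, abs_of_nonneg (Real.rpow_nonneg (norm_nonneg x) _)]
      rcases eq_or_ne x 0 with rfl | hx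
      · rw [norm_zero, Real.zero_rpow (neg_ne_zero.mpr (mul_pos hd hα).ne')]
        exact mul_nonneg (Real.rpow_nonneg hc₂.le _) (Real.rpow_nonneg (hfnn 0) _)
      · calc ‖x‖ ^ (-s) = f b ^ α * (f b ^ (-α) * ‖x‖ ^ (-s)) := by
              rw [← mul_assoc, ← Real.rpow_add hc₂, add_neg_cancel, Real.rpow_zero, one_mul]
          _ ≤ f b ^ α * f x ^ (-α) := by
              refine mul_le_mul_of_nonneg_left ?_ (Real.rpow_nonneg hc₂.le _)
              rw [← hiden (f b) hc₂ x]
              exact Real.rpow_le_rpow_of_nonpos (hpos x hx) (hbound x).2 (neg_nonpos.mpr hα.le)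
    · intro h
      refine Integrable.mono' (h.const_mul (f a ^ (-α))) hmeas_f ?_
      filter_upwards with x
      rw [Real.norm_eq_abs, abs_of_nonneg (Real.rpow_nonneg (hfnn x) _)]
      rcases eq_or_ne x 0 with rfl | hx
      · rw [h00, Real.zero_rpow (neg_ne_zero.mpr hα.ne')]
        exact mul_nonneg (Real.rpow_nonneg hc₁.le _) (Real.rpow_nonneg (norm_nonneg _) _)
      · rw [← hiden (f a) hc₁ x]
        exact Real.rpow_le_rpow_of_nonpos
          (mul_pos hc₁ (Real.rpow_pos_of_pos (norm_pos_iff.mpr hx) d))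
          (hbound x).1 (neg_nonpos.mpr hα.le)
  rw [hiff, integrableOn_norm_rpow_ball volume s, hrank, lt_div_iff₀ hd, hs]
  constructor <;> intro h <;> nlinarith [mul_comm d α]
end

section
/- Let f : ℝⁿ → ℝ be continuous, positively homogeneous of degree d > 0, with f(x) > 0 for x ≠ 0. Then the real log canonical threshold of f at 0, defined as sup{α > 0 : f^(-α) is integrable on some neighborhood of 0}, equals n/d. -/
/-! By homogeneity, `f x = ‖x‖ ^ d * f (x / ‖x‖)`, and `f` is bounded above and below by positive
constants on the compact unit sphere, so `f` is comparable to `‖x‖ ^ d`. Hence `f ^ (-α)` is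
integrable near `0` exactly when `‖x‖ ^ (-α d)` is, which in polar coordinates means
`∫₀ r ^ (n - 1 - α d) dr < ∞`, i.e. `α d < n`. The admissible `α` thus form `(0, n / d)`. -/

open MeasureTheory Metric Set Module

section

variable {E : Type*} [NormedAddCommGroup E] [NormedSpace ℝ E] [FiniteDimensional ℝ E]
  [MeasurableSpace E] [BorelSpace E] [Nontrivial E] (μ : Measure E) [μ.IsAddHaarMeasure]

theorem integrableOn_ball_norm_rpow_iff {s r : ℝ} (hr : 0 < r) :
    IntegrableOn (fun x : E => ‖x‖ ^ s) (ball 0 r) μ ↔ -(finrank ℝ E : ℝ) < s := by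
  rw [integrableOn_fun_norm_addHaar μ (f := fun y : ℝ => y ^ s),
    integrableOn_congr_fun (g := fun y : ℝ => y ^ ((finrank ℝ E : ℝ) - 1 + s)) _
      measurableSet_Ioo,
    intervalIntegral.integrableOn_Ioo_rpow_iff hr]
  · constructor <;> intro h <;> linarith
  · rintro y ⟨hy, -⟩
    dsimp only
    rw [smul_eq_mul, ← Real.rpow_natCast, ← Real.rpow_add hy, Nat.cast_sub finrank_pos,
      Nat.cast_one]

end

theorem Real.mul_rpow_rpow_neg {c y : ℝ} (hc : 0 ≤ c) (hy : 0 ≤ y) (d α : ℝ) :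
    (c * y ^ d) ^ (-α) = c ^ (-α) * y ^ (-(α * d)) := by
  rw [Real.mul_rpow hc (Real.rpow_nonneg hy d), ← Real.rpow_mul hy, mul_neg, mul_comm d]

section Homogeneous

variable {E : Type*} [NormedAddCommGroup E] [NormedSpace ℝ E] {f : E → ℝ} {d : ℝ}

theorem apply_eq_norm_rpow_mul_apply_smul_norm_inv
    (hhom : ∀ t : ℝ, 0 ≤ t → ∀ x, f (t • x) = t ^ d * f x) {x : E} (hx : x ≠ 0) :
    f x = ‖x‖ ^ d * f (‖x‖⁻¹ • x) := by
  rw [← hhom _ (norm_nonneg x), smul_smul, mul_inv_cancel₀ (norm_ne_zero_iff.mpr hx), one_smul]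

theorem exists_mul_norm_rpow_le_of_homogeneous [ProperSpace E] [Nontrivial E]
    (hf : ContinuousOn f (sphere 0 1)) (hhom : ∀ t : ℝ, 0 ≤ t → ∀ x, f (t • x) = t ^ d * f x)
    (hpos : ∀ x, x ≠ 0 → 0 < f x) :
    ∃ m M : ℝ, 0 < m ∧ 0 < M ∧ ∀ x, x ≠ 0 → m * ‖x‖ ^ d ≤ f x ∧ f x ≤ M * ‖x‖ ^ d := by
  have hne : (sphere (0 : E) 1).Nonempty := NormedSpace.sphere_nonempty.mpr zero_le_one
  obtain ⟨u, hu, hu_min⟩ := (isCompact_sphere (0 : E) 1).exists_isMinOn hne hf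
  obtain ⟨v, hv, hv_max⟩ := (isCompact_sphere (0 : E) 1).exists_isMaxOn hne hf
  have hsphere : ∀ w ∈ sphere (0 : E) 1, w ≠ 0 := fun w hw => ne_zero_of_mem_unit_sphere ⟨w, hw⟩
  refine ⟨f u, f v, hpos u (hsphere u hu), hpos v (hsphere v hv), fun x hx => ?_⟩
  have hx' : ‖x‖⁻¹ • x ∈ sphere (0 : E) 1 := by
    rw [mem_sphere_zero_iff_norm, norm_smul, norm_inv, norm_norm,
      inv_mul_cancel₀ (norm_ne_zero_iff.mpr hx)]
  have hnorm : 0 ≤ ‖x‖ ^ d := Real.rpow_nonneg (norm_nonneg x) d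
  rw [apply_eq_norm_rpow_mul_apply_smul_norm_inv hhom hx, mul_comm (f u), mul_comm (f v)]
  exact ⟨mul_le_mul_of_nonneg_left (hu_min hx') hnorm,
    mul_le_mul_of_nonneg_left (hv_max hx') hnorm⟩

variable [FiniteDimensional ℝ E] [MeasurableSpace E] [BorelSpace E] [Nontrivial E]
  (μ : Measure E) [μ.IsAddHaarMeasure]

theorem integrableOn_ball_rpow_neg_iff_of_homogeneous (hf : Continuous f)
    (hhom : ∀ t : ℝ, 0 ≤ t → ∀ x, f (t • x) = t ^ d * f x) (hpos : ∀ x, x ≠ 0 → 0 < f x)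
    {α ε : ℝ} (hα : 0 ≤ α) (hε : 0 < ε) :
    IntegrableOn (fun x => f x ^ (-α)) (ball 0 ε) μ ↔ α * d < finrank ℝ E := by
  obtain ⟨m, M, hm, hM, hbound⟩ :=
    exists_mul_norm_rpow_le_of_homogeneous hf.continuousOn hhom hpos
  rw [← neg_lt_neg_iff, ← integrableOn_ball_norm_rpow_iff μ hε]
  have hα' : -α ≤ 0 := neg_nonpos.mpr hα
  constructor
  · refine fun h => (h.const_mul (M ^ α)).mono'
      (measurable_norm.pow_const _).aestronglyMeasurable (ae_restrict_of_ae ?_)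
    filter_upwards [μ.ae_ne 0] with x hx
    have hx' : 0 < ‖x‖ := norm_pos_iff.mpr hx
    rw [Real.norm_of_nonneg (by positivity)]
    calc ‖x‖ ^ (-(α * d)) = M ^ α * (M * ‖x‖ ^ d) ^ (-α) := by
          rw [Real.mul_rpow_rpow_neg hM.le hx'.le, ← mul_assoc, ← Real.rpow_add hM,
            add_neg_cancel, Real.rpow_zero, one_mul]
      _ ≤ M ^ α * f x ^ (-α) := mul_le_mul_of_nonneg_left
          (Real.rpow_le_rpow_of_nonpos (hpos x hx) (hbound x hx).2 hα') (by positivity)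
  · refine fun h => (h.const_mul (m ^ (-α))).mono'
      (hf.measurable.pow_const _).aestronglyMeasurable (ae_restrict_of_ae ?_)
    filter_upwards [μ.ae_ne 0] with x hx
    have hx' : 0 < ‖x‖ := norm_pos_iff.mpr hx
    rw [Real.norm_of_nonneg (Real.rpow_nonneg (hpos x hx).le _),
      ← Real.mul_rpow_rpow_neg hm.le hx'.le]
    exact Real.rpow_le_rpow_of_nonpos (by positivity) (hbound x hx).1 hα'

end Homogeneous

theorem rlct_homogeneous_pos (n : ℕ) (hn : 1 ≤ n) (d : ℝ) (hd : 0 < d)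
    (f : EuclideanSpace ℝ (Fin n) → ℝ) (hf : Continuous f)
    (hhom : ∀ t : ℝ, 0 ≤ t → ∀ x, f (t • x) = t ^ d * f x)
    (hpos : ∀ x, x ≠ 0 → 0 < f x) :
    sSup {α : ℝ | 0 < α ∧ ∃ ε > 0, IntegrableOn (fun x => f x ^ (-α))
        (Metric.ball (0 : EuclideanSpace ℝ (Fin n)) ε)} = n / d := by
  have : Nonempty (Fin n) := ⟨⟨0, hn⟩⟩
  have hset : {α : ℝ | 0 < α ∧ ∃ ε > 0, IntegrableOn (fun x => f x ^ (-α))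
      (ball (0 : EuclideanSpace ℝ (Fin n)) ε)} = Ioo 0 (n / d) := by
    ext α
    simp only [mem_ofPred_eq, mem_Ioo, and_congr_right_iff, lt_div_iff₀ hd]
    intro hα
    have hint (ε : ℝ) (hε : 0 < ε) :=
      integrableOn_ball_rpow_neg_iff_of_homogeneous volume hf hhom hpos hα.le hε
    simp only [finrank_euclideanSpace_fin] at hint
    exact ⟨fun ⟨ε, hε, h⟩ => (hint ε hε).1 h, fun h => ⟨1, one_pos, (hint 1 one_pos).2 h⟩⟩
  rw [hset, csSup_Ioo (by positivity)]
end

section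
/- The function f(x,y,z) = (x² + y² + z²)² + x⁶ + y⁶ + z⁶ on ℝ³ satisfies: x ↦ f(x)^(-α) is integrable on the unit ball of ℝ³ if and only if α < 3/4. In particular rlct(f) = 3/4. -/
open MeasureTheory Set Metric ENNReal

noncomputable section RlctAux

local notation "E3" => EuclideanSpace ℝ (Fin 3)

lemma rlct_aux_lintegral_fun_norm (f : ℝ → ℝ≥0∞) (hf : Measurable f) :
    ∫⁻ x : E3, f ‖x‖ =
      (volume : Measure E3).toSphere univ *
        ∫⁻ y in Ioi (0 : ℝ), ENNReal.ofReal (y ^ 2) * f y := by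
  have hdim : Module.finrank ℝ E3 = 3 := by simp
  have h0 : MeasurableSet ({(0 : E3)}ᶜ) := (measurableSet_singleton _).compl
  have hm2 : Measurable fun p : sphere (0 : E3) 1 × Ioi (0 : ℝ) => f p.2 :=
    hf.comp (measurable_subtype_coe.comp measurable_snd)
  have hm3 : Measurable fun y : Ioi (0 : ℝ) => f y :=
    hf.comp measurable_subtype_coe
  calc
    ∫⁻ x : E3, f ‖x‖ = ∫⁻ x : E3 in {0}ᶜ, f ‖x‖ := by
      rw [restrict_compl_singleton]
    _ = ∫⁻ x : ({(0 : E3)}ᶜ : Set E3), f ‖x.1‖ ∂((volume : Measure E3).comap (↑)) :=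
      (lintegral_subtype_comap h0 fun x => f ‖x‖).symm
    _ = ∫⁻ p : sphere (0 : E3) 1 × Ioi (0 : ℝ), f p.2
          ∂((volume : Measure E3).toSphere.prod (.volumeIoiPow (Module.finrank ℝ E3 - 1))) := by
      refine Eq.trans ?_
        ((Measure.measurePreserving_homeomorphUnitSphereProd (volume : Measure E3)).lintegral_comp
          hm2)
      refine lintegral_congr fun x => ?_
      simp
    _ = (volume : Measure E3).toSphere univ *
          ∫⁻ y : Ioi (0 : ℝ), f y ∂(Measure.volumeIoiPow (Module.finrank ℝ E3 - 1)) := by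
      rw [lintegral_prod _ hm2.aemeasurable]
      simp [lintegral_const, mul_comm]
    _ = (volume : Measure E3).toSphere univ *
          ∫⁻ y in Ioi (0 : ℝ), ENNReal.ofReal (y ^ 2) * f y := by
      congr 1
      rw [hdim]
      rw [Measure.volumeIoiPow,
        lintegral_withDensity_eq_lintegral_mul _
          ((measurable_subtype_coe.pow_const _).ennreal_ofReal) hm3]
      rw [← lintegral_subtype_comap measurableSet_Ioi
        (fun y : ℝ => ENNReal.ofReal (y ^ 2) * f y)]
      rfl

lemma rlct_aux_key (s : ℝ) :
    (∫⁻ x : E3 in ball 0 1, ENNReal.ofReal (‖x‖ ^ s)) < ⊤ ↔ -3 < s := by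
  have hfm : Measurable fun y : ℝ => ENNReal.ofReal (y ^ s) := by measurability
  set f : ℝ → ℝ≥0∞ := (Iio (1 : ℝ)).indicator fun y => ENNReal.ofReal (y ^ s) with hfdef
  have hf : Measurable f := hfm.indicator measurableSet_Iio
  have h1 : ∫⁻ x : E3 in ball 0 1, ENNReal.ofReal (‖x‖ ^ s) = ∫⁻ x : E3, f ‖x‖ := by
    rw [← lintegral_indicator measurableSet_ball]
    refine lintegral_congr fun x => ?_
    by_cases hx : x ∈ ball (0 : E3) 1
    · rw [indicator_of_mem hx, hfdef, indicator_of_mem (by simpa [mem_ball_zero_iff] using hx)]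
    · rw [indicator_of_notMem hx, hfdef,
        indicator_of_notMem (by simpa [mem_ball_zero_iff] using hx)]
  have h2 : ∫⁻ y in Ioi (0 : ℝ), ENNReal.ofReal (y ^ 2) * f y
      = ∫⁻ y in Ioo (0 : ℝ) 1, ENNReal.ofReal (y ^ (s + 2)) := by
    calc
      ∫⁻ y in Ioi (0 : ℝ), ENNReal.ofReal (y ^ 2) * f y
          = ∫⁻ y in Ioi (0 : ℝ),
              (Iio (1 : ℝ)).indicator (fun y => ENNReal.ofReal (y ^ (s + 2))) y := by
        refine setLIntegral_congr_fun measurableSet_Ioi (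
          fun y hy => ?_)
        by_cases hy1 : y ∈ Iio (1 : ℝ)
        · rw [hfdef, indicator_of_mem hy1, indicator_of_mem hy1,
            ← ENNReal.ofReal_mul (by positivity)]
          congr 1
          have h2' : (y : ℝ) ^ 2 = y ^ (2 : ℝ) := by
            rw [← Real.rpow_natCast y 2]; norm_num
          rw [h2', ← Real.rpow_add hy]
          ring_nf
        · rw [hfdef, indicator_of_notMem hy1, indicator_of_notMem hy1, mul_zero]
      _ = ∫⁻ y in Iio (1 : ℝ) ∩ Ioi 0, ENNReal.ofReal (y ^ (s + 2)) := by
        rw [lintegral_indicator measurableSet_Iio,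
          Measure.restrict_restrict measurableSet_Iio]
      _ = ∫⁻ y in Ioo (0 : ℝ) 1, ENNReal.ofReal (y ^ (s + 2)) := by
        rw [Set.Iio_inter_Ioi]
  have h3 : (∫⁻ y in Ioo (0 : ℝ) 1, ENNReal.ofReal (y ^ (s + 2))) < ⊤ ↔ -1 < s + 2 := by
    rw [← intervalIntegral.integrableOn_Ioo_rpow_iff (one_pos)]
    constructor
    · intro h
      refine ⟨(by measurability : Measurable fun y : ℝ => y ^ (s+2)).aestronglyMeasurable, ?_⟩
      rw [hasFiniteIntegral_iff_ofReal ?pos]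
      case pos =>
        filter_upwards [ae_restrict_mem measurableSet_Ioo] with y hy
        exact Real.rpow_nonneg hy.1.le _
      exact h
    · intro h
      have := h.2
      rw [hasFiniteIntegral_iff_ofReal ?pos] at this
      case pos =>
        filter_upwards [ae_restrict_mem measurableSet_Ioo] with y hy
        exact Real.rpow_nonneg hy.1.le _
      exact this
  rw [h1, rlct_aux_lintegral_fun_norm f hf, h2]
  have hC : (volume : Measure E3).toSphere univ ≠ 0 := by
    rw [Measure.toSphere_apply_univ]
    exact mul_ne_zero (by simp) (measure_ball_pos _ _ one_pos).ne'
  have hCt : (volume : Measure E3).toSphere univ ≠ ⊤ := measure_ne_top _ _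
  rw [ENNReal.mul_lt_top_iff]
  constructor
  · rintro (⟨-, h⟩ | h | h)
    · linarith [h3.1 h]
    · exact absurd h hC
    · have := h3.1 (by rw [h]; exact ENNReal.zero_lt_top)
      linarith
  · intro h
    exact Or.inl ⟨hCt.lt_top, h3.2 (by linarith)⟩

/-- The polynomial in the example. -/
def rlctF (v : EuclideanSpace ℝ (Fin 3)) : ℝ :=
  (v 0 ^ 2 + v 1 ^ 2 + v 2 ^ 2) ^ 2 + v 0 ^ 6 + v 1 ^ 6 + v 2 ^ 6

lemma rlct_aux_norm_sq (v : E3) : ‖v‖ ^ 2 = v 0 ^ 2 + v 1 ^ 2 + v 2 ^ 2 := by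
  rw [EuclideanSpace.norm_eq, Real.sq_sqrt (by positivity)]
  simp [Fin.sum_univ_three, sq_abs]

lemma rlct_aux_low (v : E3) : ‖v‖ ^ 4 ≤ rlctF v := by
  have hn2 := rlct_aux_norm_sq v
  unfold rlctF
  nlinarith [sq_nonneg (v 0 ^ 3), sq_nonneg (v 1 ^ 3), sq_nonneg (v 2 ^ 3)]

lemma rlct_aux_nonneg (v : E3) : 0 ≤ rlctF v :=
  le_trans (by positivity) (rlct_aux_low v)

lemma rlct_aux_up (v : E3) (hv : ‖v‖ ≤ 1) : rlctF v ≤ 4 * ‖v‖ ^ 4 := by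
  have hn2 := rlct_aux_norm_sq v
  have h0le : ∀ i : Fin 3, v i ^ 2 ≤ ‖v‖ ^ 2 := by
    intro i
    fin_cases i <;> simp <;> nlinarith [sq_nonneg (v 0), sq_nonneg (v 1), sq_nonneg (v 2)]
  have h6le : ∀ i : Fin 3, v i ^ 6 ≤ ‖v‖ ^ 4 := by
    intro i
    have h1 : v i ^ 6 ≤ ‖v‖ ^ 6 := by
      calc v i ^ 6 = (v i ^ 2) ^ 3 := by ring
        _ ≤ (‖v‖ ^ 2) ^ 3 := pow_le_pow_left₀ (sq_nonneg _) (h0le i) 3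
        _ = ‖v‖ ^ 6 := by ring
    have h2 : ‖v‖ ^ 6 ≤ ‖v‖ ^ 4 :=
      pow_le_pow_of_le_one (norm_nonneg v) hv (by norm_num)
    linarith
  have := h6le 0; have := h6le 1; have := h6le 2
  unfold rlctF
  nlinarith

lemma rlct_aux_meas (α : ℝ) : Measurable fun v : E3 => rlctF v ^ (-α) := by
  have hr : Measurable fun x : ℝ => x ^ (-α) := by measurability
  have hm : ∀ i : Fin 3, Measurable fun v : E3 => v i := fun i => (measurable_pi_apply i).comp (WithLp.measurable_ofLp _ _)
  exact hr.comp (((((hm 0).pow_const 2).add ((hm 1).pow_const 2)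
    |>.add ((hm 2).pow_const 2)).pow_const 2
    |>.add ((hm 0).pow_const 6) |>.add ((hm 1).pow_const 6)).add ((hm 2).pow_const 6))

lemma rlct_aux_measnorm (α : ℝ) :
    Measurable fun v : E3 => ENNReal.ofReal (‖v‖ ^ (-(4*α))) := by
  have hr : Measurable fun x : ℝ => ENNReal.ofReal (x ^ (-(4*α))) := by measurability
  exact hr.comp measurable_norm

end RlctAux

set_option maxHeartbeats 1000000 in
theorem rlct_example_three_quarters (α : ℝ) :
    IntegrableOn
      (fun v : EuclideanSpace ℝ (Fin 3) =>
        ((v 0 ^ 2 + v 1 ^ 2 + v 2 ^ 2) ^ 2 + v 0 ^ 6 + v 1 ^ 6 + v 2 ^ 6) ^ (-α))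
      (Metric.ball (0 : EuclideanSpace ℝ (Fin 3)) 1) ↔ α < 3 / 4 := by
  have hfun : (fun v : EuclideanSpace ℝ (Fin 3) =>
      ((v 0 ^ 2 + v 1 ^ 2 + v 2 ^ 2) ^ 2 + v 0 ^ 6 + v 1 ^ 6 + v 2 ^ 6) ^ (-α)) =
      fun v => rlctF v ^ (-α) := by
    funext v
    rw [rlctF]
  rw [hfun]
  have hg : Measurable fun v : EuclideanSpace ℝ (Fin 3) => rlctF v ^ (-α) := rlct_aux_meas α
  have hgnn : ∀ v : EuclideanSpace ℝ (Fin 3), 0 ≤ rlctF v ^ (-α) :=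
    fun v => Real.rpow_nonneg (rlct_aux_nonneg v) _
  have hiff : IntegrableOn (fun v : EuclideanSpace ℝ (Fin 3) => rlctF v ^ (-α))
      (Metric.ball 0 1) ↔
      (∫⁻ v in Metric.ball (0 : EuclideanSpace ℝ (Fin 3)) 1,
        ENNReal.ofReal (rlctF v ^ (-α))) < ⊤ := by
    constructor
    · intro h
      have := h.2
      rwa [hasFiniteIntegral_iff_ofReal (Filter.Eventually.of_forall hgnn)] at this
    · intro h
      exact ⟨hg.aestronglyMeasurable,
        (hasFiniteIntegral_iff_ofReal (Filter.Eventually.of_forall hgnn)).2 h⟩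
  rw [hiff]
  have h0ae : ∀ᵐ v : EuclideanSpace ℝ (Fin 3), v ≠ 0 := by
    simp [ae_iff, measure_singleton]
  have hball0 : ∀ᵐ v ∂(volume.restrict (Metric.ball (0 : EuclideanSpace ℝ (Fin 3)) 1)),
      v ∈ Metric.ball (0 : EuclideanSpace ℝ (Fin 3)) 1 ∧ v ≠ 0 := by
    filter_upwards [ae_restrict_mem measurableSet_ball, ae_restrict_of_ae h0ae] with v h1 h2
    exact ⟨h1, h2⟩
  have hid : ∀ v : EuclideanSpace ℝ (Fin 3),
      ((‖v‖ ^ (4:ℕ) : ℝ)) ^ (-α) = ‖v‖ ^ (-(4*α)) := by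
    intro v
    rw [← Real.rpow_natCast ‖v‖ 4, ← Real.rpow_mul (norm_nonneg v)]
    norm_num
  constructor
  · intro hfin
    by_contra hge
    push_neg at hge
    have hα0 : (0:ℝ) ≤ α := le_trans (by norm_num) hge
    have hub : ∀ᵐ v ∂(volume.restrict (Metric.ball (0 : EuclideanSpace ℝ (Fin 3)) 1)),
        ENNReal.ofReal ((4:ℝ)^(-α)) * ENNReal.ofReal (‖v‖ ^ (-(4*α)))
          ≤ ENNReal.ofReal (rlctF v ^ (-α)) := by
      filter_upwards [hball0] with v hv
      obtain ⟨hv1, hv0⟩ := hv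
      have hn0 : 0 < ‖v‖ := norm_pos_iff.2 hv0
      have hF0 : 0 < rlctF v := lt_of_lt_of_le (by positivity) (rlct_aux_low v)
      have h1 : (4 * ‖v‖^4 : ℝ) ^ (-α) ≤ rlctF v ^ (-α) :=
        Real.rpow_le_rpow_of_nonpos hF0
          (rlct_aux_up v (mem_ball_zero_iff.1 hv1).le) (neg_nonpos.2 hα0)
      have h2 : (4 * ‖v‖^4 : ℝ) ^ (-α) = 4^(-α) * ‖v‖ ^ (-(4*α)) := by
        rw [Real.mul_rpow (by norm_num) (by positivity), hid v]
      rw [h2] at h1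
      calc ENNReal.ofReal ((4:ℝ)^(-α)) * ENNReal.ofReal (‖v‖ ^ (-(4*α)))
          = ENNReal.ofReal ((4:ℝ)^(-α) * ‖v‖ ^ (-(4*α))) :=
            (ENNReal.ofReal_mul (Real.rpow_nonneg (by norm_num) _)).symm
        _ ≤ ENNReal.ofReal (rlctF v ^ (-α)) := ENNReal.ofReal_le_ofReal h1
    have hint := lintegral_mono_ae hub
    rw [lintegral_const_mul _ (rlct_aux_measnorm α)] at hint
    have hinf : (∫⁻ v in Metric.ball (0 : EuclideanSpace ℝ (Fin 3)) 1,
        ENNReal.ofReal (‖v‖ ^ (-(4*α)))) = ⊤ := by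
      by_contra hne
      have hlt := lt_top_iff_ne_top.2 hne
      have := (rlct_aux_key (-(4*α))).1 hlt
      linarith
    rw [hinf, ENNReal.mul_top
      (ENNReal.ofReal_pos.2 (Real.rpow_pos_of_pos (by norm_num) (-α))).ne'] at hint
    rw [top_le_iff.1 hint] at hfin
    exact lt_irrefl _ hfin
  · intro hα
    set C := max 1 ((4:ℝ)^(-α)) with hCdef
    have hC0 : (0:ℝ) ≤ C := le_trans zero_le_one (le_max_left _ _)
    have hub : ∀ᵐ v ∂(volume.restrict (Metric.ball (0 : EuclideanSpace ℝ (Fin 3)) 1)),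
        ENNReal.ofReal (rlctF v ^ (-α))
          ≤ ENNReal.ofReal C * ENNReal.ofReal (‖v‖ ^ (-(4*α))) := by
      filter_upwards [hball0] with v hv
      obtain ⟨hv1, hv0⟩ := hv
      have hn0 : 0 < ‖v‖ := norm_pos_iff.2 hv0
      have hnle : ‖v‖ ≤ 1 := (mem_ball_zero_iff.1 hv1).le
      have key : rlctF v ^ (-α) ≤ C * ‖v‖ ^ (-(4*α)) := by
        rcases le_or_gt 0 α with hα0 | hα0
        · have h1 : rlctF v ^ (-α) ≤ (‖v‖^4 : ℝ) ^ (-α) :=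
            Real.rpow_le_rpow_of_nonpos (by positivity) (rlct_aux_low v) (neg_nonpos.2 hα0)
          rw [hid v] at h1
          exact h1.trans (le_mul_of_one_le_left
            (Real.rpow_nonneg (norm_nonneg v) _) (le_max_left _ _))
        · have h1 : rlctF v ^ (-α) ≤ (4 * ‖v‖^4 : ℝ) ^ (-α) :=
            Real.rpow_le_rpow (rlct_aux_nonneg v) (rlct_aux_up v hnle) (by linarith)
          have h2 : (4 * ‖v‖^4 : ℝ) ^ (-α) = 4^(-α) * ‖v‖ ^ (-(4*α)) := by
            rw [Real.mul_rpow (by norm_num) (by positivity), hid v]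
          rw [h2] at h1
          exact h1.trans (mul_le_mul_of_nonneg_right (le_max_right _ _)
            (Real.rpow_nonneg (norm_nonneg v) _))
      calc ENNReal.ofReal (rlctF v ^ (-α))
          ≤ ENNReal.ofReal (C * ‖v‖ ^ (-(4*α))) := ENNReal.ofReal_le_ofReal key
        _ = ENNReal.ofReal C * ENNReal.ofReal (‖v‖ ^ (-(4*α))) := ENNReal.ofReal_mul hC0
    calc (∫⁻ v in Metric.ball (0 : EuclideanSpace ℝ (Fin 3)) 1,
          ENNReal.ofReal (rlctF v ^ (-α)))
        ≤ ∫⁻ v in Metric.ball (0 : EuclideanSpace ℝ (Fin 3)) 1,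
            ENNReal.ofReal C * ENNReal.ofReal (‖v‖ ^ (-(4*α))) := lintegral_mono_ae hub
      _ = ENNReal.ofReal C * ∫⁻ v in Metric.ball (0 : EuclideanSpace ℝ (Fin 3)) 1,
            ENNReal.ofReal (‖v‖ ^ (-(4*α))) := lintegral_const_mul _ (rlct_aux_measnorm α)
      _ < ⊤ := ENNReal.mul_lt_top ENNReal.ofReal_lt_top
          ((rlct_aux_key (-(4*α))).2 (by linarith))
end

section
/- Monomial case: let m = (m₁,...,mₙ) ∈ ℕⁿ with all mᵢ ≥ 1, and f(x) = ∏ᵢ xᵢ^{mᵢ}. Then for α > 0, |f|^(-α) is integrable on [-1,1]ⁿ if and only if α < min_i (1/mᵢ). Hence rlct(∏ xᵢ^{mᵢ}) = min_i 1/mᵢ. -/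
open MeasureTheory

open scoped ENNReal in
theorem my_lintegral_fin_nat_prod {n : ℕ} {E : Fin n → Type*}
    [∀ i, MeasureSpace (E i)] [∀ i, SigmaFinite (volume : Measure (E i))]
    {f : (i : Fin n) → E i → ℝ≥0∞} (hf : ∀ i, Measurable (f i)) :
    ∫⁻ x : (i : Fin n) → E i, ∏ i, f i (x i) = ∏ i, ∫⁻ x, f i x := by
  induction n with
  | zero => simp [volume_pi]
  | succ n n_ih =>
      have := ((measurePreserving_piFinSuccAbove (fun i => (volume : Measure (E i))) 0).symm)
      rw [volume_pi, ← this.lintegral_comp_emb (MeasurableEquiv.measurableEmbedding _)]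
      simp_rw [MeasurableEquiv.piFinSuccAbove_symm_apply, Fin.insertNthEquiv,
        Fin.prod_univ_succ, Fin.insertNth_zero]
      simp only [Fin.zero_succAbove, Function.comp_def, Fin.cons_zero, Fin.cons_succ,
        Equiv.coe_fn_mk, cast_eq]
      refine (lintegral_prod_mul (μ := (volume : Measure (E 0)))
        (ν := Measure.pi fun j : Fin n => (volume : Measure (E j.succ)))
        (f := f 0) (g := fun y => ∏ j : Fin n, f j.succ (y j)) (hf 0).aemeasurable
        ((Finset.measurable_prod _ fun j _ =>
          (hf j.succ).comp (measurable_pi_apply j)).aemeasurable)).trans ?_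
      rw [show (Measure.pi fun j : Fin n => (volume : Measure (E j.succ))) = volume from
        volume_pi.symm, n_ih fun j => hf j.succ]

lemma oneD (p : ℝ) (hp : 0 < p) :
    IntegrableOn (fun x : ℝ => |x| ^ (-p)) (Set.Icc (-1:ℝ) 1) ↔ p < 1 := by
  constructor
  · intro h
    have h1 : IntegrableOn (fun x : ℝ => x ^ (-p)) (Set.Ioo (0:ℝ) 1) := by
      refine (h.mono_set fun x hx => ?_).congr_fun (fun x hx => ?_) measurableSet_Ioo
      · exact ⟨by linarith [hx.1], le_of_lt hx.2⟩
      · beta_reduce; rw [abs_of_pos hx.1]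
    have := (intervalIntegral.integrableOn_Ioo_rpow_iff (zero_lt_one)).mp h1
    linarith
  · intro h
    have h1 : IntegrableOn (fun x : ℝ => |x| ^ (-p)) (Set.Ioo (0:ℝ) 1) := by
      refine ((intervalIntegral.integrableOn_Ioo_rpow_iff (s := -p) zero_lt_one).mpr
        (by linarith)).congr_fun (fun x hx => ?_) measurableSet_Ioo
      rw [abs_of_pos hx.1]
    have h2 : IntegrableOn (fun x : ℝ => |x| ^ (-p)) (Set.Ioo (-1:ℝ) 0) := by
      rw [← (Measure.measurePreserving_neg (volume : Measure ℝ)).integrableOn_comp_preimage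
        (Homeomorph.neg ℝ).measurableEmbedding]
      have : Neg.neg ⁻¹' Set.Ioo (-1:ℝ) 0 = Set.Ioo 0 1 := by
        ext x
        simp only [Set.mem_preimage, Set.mem_Ioo]
        constructor <;> rintro ⟨a, b⟩ <;> constructor <;> linarith
      rw [this]
      simpa only [Function.comp_def, abs_neg] using h1
    have h3 : IntegrableOn (fun x : ℝ => |x| ^ (-p)) ({-1, 0, 1} : Set ℝ) := by
      have : (volume : Measure ℝ).restrict ({-1, 0, 1} : Set ℝ) = 0 := by
        rw [Measure.restrict_eq_zero]
        exact (Set.toFinite _).measure_zero _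
      rw [IntegrableOn, this]
      exact integrable_zero_measure
    have hsub : Set.Icc (-1:ℝ) 1 ⊆ (Set.Ioo (-1:ℝ) 0 ∪ Set.Ioo (0:ℝ) 1) ∪ ({-1, 0, 1} : Set ℝ) := by
      intro x hx
      rcases lt_trichotomy x 0 with h' | h' | h'
      · rcases eq_or_lt_of_le hx.1 with h'' | h''
        · exact Or.inr (by simp [← h''])
        · exact Or.inl (Or.inl ⟨h'', h'⟩)
      · exact Or.inr (by simp [h'])
      · rcases eq_or_lt_of_le hx.2 with h'' | h''
        · exact Or.inr (by simp [h''])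
        · exact Or.inl (Or.inr ⟨h', h''⟩)
    exact ((h2.union h1).union h3).mono_set hsub

open scoped ENNReal

theorem rlct_monomial (n : ℕ) (hn : 1 ≤ n) (m : Fin n → ℕ) (hm : ∀ i, 1 ≤ m i)
    (α : ℝ) (hα : 0 < α) :
    IntegrableOn (fun x : Fin n → ℝ => ∏ i, |x i| ^ (-((m i : ℝ) * α)))
        (Set.pi Set.univ fun _ => Set.Icc (-1 : ℝ) 1) ↔
      α < ⨅ i, 1 / (m i : ℝ) := by
  haveI : Nonempty (Fin n) := ⟨⟨0, hn⟩⟩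
  set s : Set ℝ := Set.Icc (-1:ℝ) 1 with hs_def
  have hmi : ∀ i, (0:ℝ) < m i := fun i => by exact_mod_cast hm i
  have hp : ∀ i, 0 < (m i : ℝ) * α := fun i => mul_pos (hmi i) hα
  have hfnn : ∀ (i : Fin n) (t : ℝ), 0 ≤ |t| ^ (-((m i : ℝ) * α)) := fun i t => Real.rpow_nonneg (abs_nonneg t) _
  have hmeas : ∀ i : Fin n, Measurable (fun t : ℝ => |t| ^ (-((m i : ℝ) * α))) := fun i =>
    measurable_abs.pow_const _
  have hinn : ∀ (i : Fin n) (t : ℝ),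
      0 ≤ Set.indicator s (fun u : ℝ => |u| ^ (-((m i : ℝ) * α))) t := fun i t =>
    Set.indicator_nonneg (fun u _ => hfnn i u) t
  have hS : MeasurableSet (Set.pi Set.univ fun _ : Fin n => s) :=
    MeasurableSet.univ_pi fun _ => measurableSet_Icc
  rw [← integrable_indicator_iff hS]
  have hindeq : Set.indicator (Set.pi Set.univ fun _ : Fin n => s)
      (fun x : Fin n → ℝ => ∏ i, |x i| ^ (-((m i : ℝ) * α))) =
      fun x : Fin n → ℝ => ∏ i, Set.indicator s (fun u : ℝ => |u| ^ (-((m i : ℝ) * α))) (x i) := by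
    funext x
    by_cases hx : x ∈ Set.pi Set.univ fun _ : Fin n => s
    · rw [Set.indicator_of_mem hx]
      exact Finset.prod_congr rfl fun i _ =>
        (Set.indicator_of_mem (hx i (Set.mem_univ i))
          (fun u : ℝ => |u| ^ (-((m i : ℝ) * α)))).symm
    · rw [Set.indicator_of_notMem hx]
      simp only [Set.mem_univ_pi, not_forall] at hx
      obtain ⟨i, hi⟩ := hx
      exact (Finset.prod_eq_zero (Finset.mem_univ i)
        (Set.indicator_of_notMem hi _)).symm
  rw [hindeq]
  set G : Fin n → ℝ → ℝ≥0∞ := fun i t => ENNReal.ofReal (Set.indicator s (fun u : ℝ => |u| ^ (-((m i : ℝ) * α))) t) with hG_def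
  have hGmeas : ∀ i, Measurable (G i) := fun i =>
    ((hmeas i).indicator measurableSet_Icc).ennreal_ofReal
  have key : (∫⁻ x : Fin n → ℝ, ∏ i, G i (x i)) = ∏ i, ∫⁻ t, G i t :=
    my_lintegral_fin_nat_prod hGmeas
  -- integrability iff product of lintegrals finite
  have hasm : AEStronglyMeasurable (fun x : Fin n → ℝ => ∏ i, Set.indicator s (fun u : ℝ => |u| ^ (-((m i : ℝ) * α))) (x i))
      (volume : Measure (Fin n → ℝ)) :=
    (Finset.measurable_prod _ fun i _ =>
      ((hmeas i).indicator measurableSet_Icc).comp (measurable_pi_apply i)).aestronglyMeasurable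
  have step1 : Integrable (fun x : Fin n → ℝ => ∏ i, Set.indicator s (fun u : ℝ => |u| ^ (-((m i : ℝ) * α))) (x i)) ↔
      (∏ i, ∫⁻ t, G i t) < ⊤ := by
    rw [← key]
    constructor
    · intro h
      have := (hasFiniteIntegral_iff_ofReal (Filter.Eventually.of_forall fun x =>
        Finset.prod_nonneg fun i _ => hinn i (x i))).mp h.2
      refine lt_of_le_of_lt (le_of_eq ?_) this
      refine lintegral_congr fun x => ?_
      rw [ENNReal.ofReal_prod_of_nonneg fun i _ => hinn i (x i)]
    · intro h
      refine ⟨hasm, (hasFiniteIntegral_iff_ofReal (Filter.Eventually.of_forall fun x =>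
        Finset.prod_nonneg fun i _ => hinn i (x i))).mpr ?_⟩
      refine lt_of_le_of_lt (le_of_eq ?_) h
      refine lintegral_congr fun x => ?_
      rw [ENNReal.ofReal_prod_of_nonneg fun i _ => hinn i (x i)]
  rw [step1]
  -- each factor is nonzero
  have hGpos : ∀ i, (∫⁻ t, G i t) ≠ 0 := by
    intro i
    have hsub : Set.Icc (2⁻¹:ℝ) 1 ⊆ s := fun t ht => ⟨by linarith [ht.1], ht.2⟩
    have hlow : (Set.Icc (2⁻¹:ℝ) 1).indicator (fun _ => (1:ℝ≥0∞)) ≤ G i := by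
      intro t
      by_cases ht : t ∈ Set.Icc (2⁻¹:ℝ) 1
      · rw [Set.indicator_of_mem ht]
        rw [hG_def]
        simp only
        rw [Set.indicator_of_mem (hsub ht) (fun u : ℝ => |u| ^ (-((m i : ℝ) * α)))]
        rw [← ENNReal.ofReal_one]
        apply ENNReal.ofReal_le_ofReal
        have h1 : 0 < |t| := by rw [abs_of_pos (by linarith [ht.1] : (0:ℝ) < t)]; linarith [ht.1]
        have h2 : |t| ≤ 1 := by rw [abs_of_pos (by linarith [ht.1] : (0:ℝ) < t)]; exact ht.2
        exact Real.one_le_rpow_of_pos_of_le_one_of_nonpos h1 h2 (by linarith [hp i])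
      · rw [Set.indicator_of_notMem ht]; exact zero_le
    have : (0:ℝ≥0∞) < ∫⁻ t, (Set.Icc (2⁻¹:ℝ) 1).indicator (fun _ => (1:ℝ≥0∞)) t := by
      rw [lintegral_indicator_const measurableSet_Icc, one_mul, Real.volume_Icc]
      simp only [ENNReal.ofReal_pos]
      norm_num
    exact (this.trans_le (lintegral_mono hlow)).ne'
  -- each factor finite iff exponent < 1
  have hfin : ∀ i, ((∫⁻ t, G i t) < ⊤ ↔ (m i : ℝ) * α < 1) := by
    intro i
    rw [← oneD _ (hp i), ← integrable_indicator_iff (measurableSet_Icc : MeasurableSet s)]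
    constructor
    · intro h
      exact ⟨((hmeas i).indicator measurableSet_Icc).aestronglyMeasurable,
        (hasFiniteIntegral_iff_ofReal (Filter.Eventually.of_forall fun t => hinn i t)).mpr h⟩
    · intro h
      exact (hasFiniteIntegral_iff_ofReal (Filter.Eventually.of_forall fun t => hinn i t)).mp h.2
  -- product finite iff each finite
  have hprod : (∏ i, ∫⁻ t, G i t) < ⊤ ↔ ∀ i, (∫⁻ t, G i t) < ⊤ := by
    constructor
    · intro h i
      by_contra hc
      rw [not_lt, top_le_iff] at hc
      have hrest : (∏ j ∈ Finset.univ.erase i, ∫⁻ t, G j t) ≠ 0 :=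
        Finset.prod_ne_zero_iff.mpr fun j _ => hGpos j
      have : (∏ j, ∫⁻ t, G j t) = ⊤ := by
        rw [← Finset.mul_prod_erase Finset.univ _ (Finset.mem_univ i), hc,
          ENNReal.top_mul hrest]
      rw [this] at h
      exact absurd h (lt_irrefl _)
    · exact fun h => ENNReal.prod_lt_top fun i _ => h i
  rw [hprod]
  simp only [hfin]
  -- final arithmetic
  constructor
  · intro h
    obtain ⟨j, hj⟩ := Finite.exists_min fun i => 1 / (m i : ℝ)
    have : α < 1 / (m j : ℝ) := by
      rw [lt_div_iff₀ (hmi j), mul_comm]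
      exact h j
    exact lt_of_lt_of_le this (le_ciInf hj)
  · intro h i
    have hi : α < 1 / (m i : ℝ) :=
      lt_of_lt_of_le h (ciInf_le (Set.finite_range _).bddBelow i)
    rw [lt_div_iff₀ (hmi i), mul_comm] at hi
    exact hi
end
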